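/- For every function s : ℕ → ℝ with s(n) ≥ 1 for all n and such that s(n)·n/2^n → 0 as n → ∞, the fraction of Boolean functions on n variables computable by some Boolean circuit on n inputs over the basis {AND, OR, NOT} with at most s(n) gates tends to 0 as n → ∞. Equivalently, it is impossible for a fixed positive fraction of Boolean functions on n inputs to be computable by circuits of size o(2^n/n). -/

import Mathlib

/-- A wire in a straight-line Boolean circuit: either one of the `n` input
variables or the output of one of the `k` previous gates. -/
inductive Wire (n k : ℕ) : Type where
  | input : Fin n → Wire n k
  | gate  : Fin k → Wire n k

/-- A gate over the basis {AND, OR, NOT}, with inputs taken from wires. -/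
inductive GateDesc (n k : ℕ) : Type where
  | not : Wire n k → GateDesc n k
  | and : Wire n k → Wire n k → GateDesc n k
  | or  : Wire n k → Wire n k → GateDesc n k

/-- A Boolean circuit on `n` inputs over {AND, OR, NOT}: a straight-line
program in which gate `i` may reference the inputs and gates `j < i`.
Its size is the number of gates. -/
structure Circuit (n : ℕ) : Type where
  size : ℕ
  gates : (i : Fin size) → GateDesc n i

def Wire.eval {n k : ℕ} (x : Fin n → Bool) (g : Fin k → Bool) : Wire n k → Bool
  | .input j => x j
  | .gate j => g j

def GateDesc.eval {n k : ℕ} (x : Fin n → Bool) (g : Fin k → Bool) : GateDesc n k → Bool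
  | .not w => !(w.eval x g)
  | .and w₁ w₂ => w₁.eval x g && w₂.eval x g
  | .or w₁ w₂ => w₁.eval x g || w₂.eval x g

/-- Value of gate `i` of the circuit on input `x`. -/
def Circuit.evalGate {n : ℕ} (c : Circuit n) (x : Fin n → Bool) : (i : ℕ) → i < c.size → Bool
  | i, hi => (c.gates ⟨i, hi⟩).eval x (fun j => c.evalGate x j (j.isLt.trans hi))

/-- The circuit `c` computes the Boolean function `f` if it has at least one
gate and the value of the last gate on every input `x` equals `f x`. -/
def Circuit.Computes {n : ℕ} (c : Circuit n) (f : (Fin n → Bool) → Bool) : Prop :=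
  ∃ h : 0 < c.size, ∀ x : Fin n → Bool,
    c.evalGate x (c.size - 1) (Nat.sub_lt h Nat.one_pos) = f x
/-! Shannon's counting argument: in a circuit with at most `m ≤ 2 ^ n` gates each gate has at
most `2 ^ (6 * n)` possible descriptions, so at most `2 ^ (7 * m * n)` functions have circuits of
size `m`, a vanishing fraction of all `2 ^ 2 ^ n` functions once `m * n = o(2 ^ n)`. -/

open Filter Topology

def Wire.equivSum (n k : ℕ) : Wire n k ≃ Fin n ⊕ Fin k where
  toFun
    | .input j => .inl j
    | .gate j => .inr j
  invFun
    | .inl j => .input j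
    | .inr j => .gate j
  left_inv w := by cases w <;> rfl
  right_inv w := by cases w <;> rfl

def GateDesc.equivSum (n k : ℕ) :
    GateDesc n k ≃ Wire n k ⊕ (Wire n k × Wire n k) ⊕ (Wire n k × Wire n k) where
  toFun
    | .not w => .inl w
    | .and a b => .inr (.inl (a, b))
    | .or a b => .inr (.inr (a, b))
  invFun
    | .inl w => .not w
    | .inr (.inl (a, b)) => .and a b
    | .inr (.inr (a, b)) => .or a b
  left_inv g := by cases g <;> rfl
  right_inv g := by rcases g with w | ⟨a, b⟩ | ⟨a, b⟩ <;> rfl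

instance (n k : ℕ) : Fintype (Wire n k) := Fintype.ofEquiv _ (Wire.equivSum n k).symm

instance (n k : ℕ) : Fintype (GateDesc n k) := Fintype.ofEquiv _ (GateDesc.equivSum n k).symm

theorem card_wire (n k : ℕ) : Fintype.card (Wire n k) = n + k := by
  rw [Fintype.card_congr (Wire.equivSum n k), Fintype.card_sum, Fintype.card_fin, Fintype.card_fin]

theorem card_gateDesc (n k : ℕ) :
    Fintype.card (GateDesc n k) = (n + k) + 2 * (n + k) ^ 2 := by
  rw [Fintype.card_congr (GateDesc.equivSum n k), Fintype.card_sum, Fintype.card_sum,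
    Fintype.card_prod, card_wire]
  ring

theorem card_gateDesc_le_two_pow (n k : ℕ) (hn : 0 < n) (hk : k ≤ 2 ^ n) :
    Fintype.card (GateDesc n k) ≤ 2 ^ (6 * n) := by
  have hnk : n + k ≤ 2 ^ (n + 1) := by
    have := n.lt_two_pow_self
    rw [pow_succ]; omega
  calc Fintype.card (GateDesc n k) ≤ 4 * (n + k) ^ 2 := by
        rw [card_gateDesc]; nlinarith
    _ ≤ 4 * (2 ^ (n + 1)) ^ 2 := by gcongr
    _ = 2 ^ (2 * n + 4) := by ring
    _ ≤ 2 ^ (6 * n) := Nat.pow_le_pow_right two_pos (by omega)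

def Circuit.eval {n : ℕ} (c : Circuit n) (x : Fin n → Bool) : Bool :=
  if h : 0 < c.size then c.evalGate x (c.size - 1) (Nat.sub_lt h Nat.one_pos) else false

theorem Circuit.Computes.eval_eq {n : ℕ} {c : Circuit n} {f : (Fin n → Bool) → Bool}
    (hc : c.Computes f) : c.eval = f := by
  obtain ⟨hpos, hf⟩ := hc
  funext x
  simp only [Circuit.eval, dif_pos hpos, hf]

def computableWithin (n m : ℕ) : Set ((Fin n → Bool) → Bool) :=
  {f | ∃ C : Circuit n, C.size ≤ m ∧ C.Computes f}

theorem computableWithin_subset_range (n m : ℕ) :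
    computableWithin n m ⊆
      Set.range fun c : Σ k : Fin (m + 1), ((i : Fin k) → GateDesc n i) =>
        (Circuit.mk c.1 c.2).eval :=
  fun _ ⟨C, hCm, hC⟩ => ⟨⟨⟨C.size, Nat.lt_succ_of_le hCm⟩, C.gates⟩, hC.eval_eq⟩

theorem card_computableWithin_le (n m : ℕ) (hn : 0 < n) (hm : m ≤ 2 ^ n) :
    Nat.card (computableWithin n m) ≤ 2 ^ (7 * m * n) := by
  have hcircuits : ∀ k : Fin (m + 1),
      Fintype.card ((i : Fin k) → GateDesc n i) ≤ (2 ^ (6 * n)) ^ m := by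
    intro k
    rw [Fintype.card_pi]
    calc ∏ i : Fin k, Fintype.card (GateDesc n i) ≤ (2 ^ (6 * n)) ^ (k : ℕ) := by
          simpa using Finset.prod_le_pow_card Finset.univ
            (fun i : Fin k => Fintype.card (GateDesc n i)) _ fun i _ =>
              card_gateDesc_le_two_pow n i hn (by have := i.isLt; have := k.isLt; omega)
      _ ≤ (2 ^ (6 * n)) ^ m := Nat.pow_le_pow_right (by positivity) (by omega)
  calc Nat.card (computableWithin n m)
      ≤ Nat.card (Σ k : Fin (m + 1), ((i : Fin k) → GateDesc n i)) :=
        (Nat.card_mono (Set.toFinite _) (computableWithin_subset_range n m)).trans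
          (Finite.card_range_le _)
    _ ≤ (m + 1) * (2 ^ (6 * n)) ^ m := by
        rw [Nat.card_eq_fintype_card, Fintype.card_sigma]
        simpa using Finset.sum_le_card_nsmul Finset.univ _ _ fun k _ => hcircuits k
    _ ≤ 2 ^ (m * n) * (2 ^ (6 * n)) ^ m := by
        gcongr
        exact m.lt_two_pow_self.trans_le
          (Nat.pow_le_pow_right two_pos (Nat.le_mul_of_pos_right m hn))
    _ = 2 ^ (7 * m * n) := by ring

theorem tendsto_two_rpow_sub_two_pow {a : ℕ → ℝ}
    (h : Tendsto (fun n => a n / 2 ^ n) atTop (𝓝 0)) :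
    Tendsto (fun n => (2 : ℝ) ^ (a n - 2 ^ n)) atTop (𝓝 0) := by
  have hexp : Tendsto (fun n => a n - 2 ^ n) atTop atBot := by
    have hfactor : (fun n => a n - 2 ^ n) = fun n => (2 : ℝ) ^ n * (a n / 2 ^ n - 1) := by
      funext n; field_simp
    rw [hfactor]
    exact (tendsto_pow_atTop_atTop_of_one_lt one_lt_two).atTop_mul_neg (by norm_num)
      (h.sub_const 1)
  exact (tendsto_rpow_atBot_of_base_gt_one 2 one_lt_two).comp hexp

theorem tendsto_card_computableWithin_div (m : ℕ → ℕ)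
    (h : Tendsto (fun n => (m n * n : ℝ) / 2 ^ n) atTop (𝓝 0)) :
    Tendsto (fun n => (Nat.card (computableWithin n (m n)) : ℝ) / 2 ^ 2 ^ n) atTop (𝓝 0) := by
  refine squeeze_zero' (Eventually.of_forall fun n => by positivity) ?_
    (tendsto_two_rpow_sub_two_pow (a := fun n => 7 * (m n * n : ℝ))
      (by simpa [mul_div_assoc] using h.const_mul 7))
  filter_upwards [h.eventually (eventually_le_nhds one_pos), eventually_gt_atTop 0]
    with n hratio hn
  have hm : m n ≤ 2 ^ n := by
    have : (m n : ℝ) ≤ 2 ^ n :=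
      calc (m n : ℝ) ≤ m n * n := le_mul_of_one_le_right (by positivity) (by exact_mod_cast hn)
        _ ≤ 2 ^ n := (div_le_one (by positivity)).mp hratio
    exact_mod_cast this
  have hcard : (Nat.card (computableWithin n (m n)) : ℝ) ≤ (2 : ℝ) ^ (7 * (m n * n : ℝ)) :=
    calc (Nat.card (computableWithin n (m n)) : ℝ) ≤ ((2 ^ (7 * m n * n) : ℕ) : ℝ) := by
          exact_mod_cast card_computableWithin_le n (m n) hn hm
      _ = (2 : ℝ) ^ (7 * (m n * n : ℝ)) := by
          rw [Nat.cast_pow, ← Real.rpow_natCast]; push_cast; ring_nf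
  have hden : (2 : ℝ) ^ 2 ^ n = (2 : ℝ) ^ ((2 : ℝ) ^ n) := by
    rw [← Real.rpow_natCast]; push_cast; rfl
  rwa [div_le_iff₀ (by positivity), hden, ← Real.rpow_add two_pos, sub_add_cancel]

theorem Nat.floor_le_abs {α : Type*} [Ring α] [LinearOrder α] [IsStrictOrderedRing α]
    [FloorSemiring α] (a : α) : (⌊a⌋₊ : α) ≤ |a| :=
  (Nat.cast_le.mpr (Nat.floor_le_floor (le_abs_self a))).trans (Nat.floor_le (abs_nonneg a))

theorem stmt_14_general (s : ℕ → ℝ)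
    (h : Filter.Tendsto (fun n : ℕ => s n * n / 2 ^ n) Filter.atTop (nhds 0)) :
    Filter.Tendsto
      (fun n : ℕ =>
        (Nat.card {f : (Fin n → Bool) → Bool |
            ∃ C : Circuit n, (C.size : ℝ) ≤ s n ∧ C.Computes f} : ℝ) / 2 ^ (2 ^ n))
      Filter.atTop (nhds 0) := by
  have hfloor : Tendsto (fun n => (⌊s n⌋₊ * n : ℝ) / 2 ^ n) atTop (𝓝 0) := by
    refine squeeze_zero (fun n => by positivity) (fun n => ?_) (by simpa using h.abs)
    rw [abs_div, abs_mul, abs_of_nonneg (by positivity : (0 : ℝ) ≤ 2 ^ n), Nat.abs_cast]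
    gcongr
    exact Nat.floor_le_abs (s n)
  refine squeeze_zero (fun n => by positivity) (fun n => ?_)
    (tendsto_card_computableWithin_div _ hfloor)
  gcongr
  exact Nat.card_mono (Set.toFinite _) fun f ⟨C, hC, hf⟩ => ⟨C, Nat.le_floor hC, hf⟩

theorem stmt_14 (s : ℕ → ℝ) (hs : ∀ n, 1 ≤ s n)
    (h : Filter.Tendsto (fun n : ℕ => s n * n / 2 ^ n) Filter.atTop (nhds 0)) :
    Filter.Tendsto
      (fun n : ℕ =>
        (Nat.card {f : (Fin n → Bool) → Bool |
            ∃ C : Circuit n, (C.size : ℝ) ≤ s n ∧ C.Computes f} : ℝ) / 2 ^ (2 ^ n))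
      Filter.atTop (nhds 0) :=
  stmt_14_general s h
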